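/- arXiv:2202.06385 — 5 statements merged into one kernel-verified Lean document; each statement's English description precedes it below -/
import Mathlib

section
/- Let (F_i)_{i≥0} be a filtration on a probability space and let X_1, X_2, … be a sequence of {0,1}-valued random variables such that each X_i is F_i-measurable, each P_i is F_{i−1}-measurable, and ℙ(X_i = 1 | F_{i−1}) = P_i almost surely. Then for every W > 0, ℙ( ∃ n ≥ 1 : ∑_{t=1}^{n} X_t < (1/2)∑_{t=1}^{n} P_t − W ) ≤ e^{−W}. -/
open MeasureTheory

/-- Elementary inequality behind the supermartingale step. -/
lemma key_real (p : ℝ) (h0 : 0 ≤ p) :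
    Real.exp (p/2) * (1 - (1 - Real.exp (-1)) * p) ≤ 1 := by
  have he : Real.exp (-1) ≤ 1/2 := by
    rw [Real.exp_neg, inv_le_comm₀ (Real.exp_pos 1) (by norm_num)]
    have := Real.add_one_le_exp 1
    linarith
  have h2 : 1 - (1 - Real.exp (-1)) * p ≤ Real.exp (-(p/2)) := by
    have := Real.add_one_le_exp (-(p/2))
    nlinarith
  calc Real.exp (p/2) * (1 - (1 - Real.exp (-1)) * p)
      ≤ Real.exp (p/2) * Real.exp (-(p/2)) :=
        mul_le_mul_of_nonneg_left h2 (Real.exp_pos _).le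
    _ = 1 := by rw [← Real.exp_add]; simp

/-- Ville's inequality for nonnegative supermartingales, finite-horizon version. -/
theorem ville_fin {Ω : Type*} {m0 : MeasurableSpace Ω} (μ : Measure Ω)
    [IsProbabilityMeasure μ] (F : Filtration ℕ m0) (M : ℕ → Ω → ℝ)
    (hM : Supermartingale M F μ) (hpos : ∀ n ω, 0 ≤ M n ω)
    (h0 : ∀ ω, M 0 ω ≤ 1) (ε : ℝ) (hε : 0 < ε) (N : ℕ) :
    μ {ω | ∃ j ≤ N, ε ≤ M j ω} ≤ ENNReal.ofReal (1/ε) := by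
  set A := {ω | ∃ j ≤ N, ε ≤ M j ω} with hA
  have hAmeas : MeasurableSet A := by
    have : A = ⋃ j ∈ Finset.range (N+1), {ω | ε ≤ M j ω} := by
      ext ω; simp [hA, Nat.lt_succ_iff]
    rw [this]
    refine Finset.measurableSet_biUnion _ fun j _ => ?_
    exact measurableSet_le measurable_const
      ((hM.stronglyMeasurable j).measurable.le (F.le j))
  set τ : Ω → ℕ∞ := fun ω => (hittingBtwn M (Set.Ici ε) 0 N ω : ℕ) with hτdef
  have hτ : IsStoppingTime F τ :=
    hM.stronglyAdapted.adapted.isStoppingTime_hittingBtwn measurableSet_Ici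
  have hτle : ∀ ω, τ ω ≤ N := fun ω => Nat.cast_le.2 (hittingBtwn_le (u := M) (s := Set.Ici ε) (n := 0) ω)
  have hmono := (hM.neg).expected_stoppedValue_mono
    (isStoppingTime_const F 0) hτ (fun ω => by simp only [Nat.cast_zero]; exact zero_le) hτle
  have hint_sv : Integrable (stoppedValue M τ) μ := by
    have := (hM.neg).integrable_stoppedValue hτ hτle
    have heq : stoppedValue (-M) τ = -(stoppedValue M τ) := by
      funext ω; simp [stoppedValue]
    rw [heq] at this
    simpa using this.neg
  have hsv_le_one : ∫ ω, stoppedValue M τ ω ∂μ ≤ 1 := by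
    have h1 : stoppedValue (-M) (fun _ => ((0:ℕ) : WithTop ℕ)) = fun ω => -(M 0 ω) := by
      funext ω; simp [stoppedValue]
    have h2 : stoppedValue (-M) τ = fun ω => -(stoppedValue M τ ω) := by
      funext ω; simp [stoppedValue]
    change ∫ x, stoppedValue (-M) (fun _ => ((0:ℕ) : WithTop ℕ)) x ∂μ ≤ _ at hmono
    rw [h1, h2, integral_neg, integral_neg, neg_le_neg_iff] at hmono
    calc ∫ ω, stoppedValue M τ ω ∂μ ≤ ∫ ω, M 0 ω ∂μ := hmono
      _ ≤ ∫ _ω, (1:ℝ) ∂μ := integral_mono (hM.integrable 0) (integrable_const 1) h0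
      _ = 1 := by simp
  have hconst : ε * (μ A).toReal ≤ ∫ ω in A, stoppedValue M τ ω ∂μ := by
    refine setIntegral_ge_of_const_le_real hAmeas (measure_ne_top μ A) ?_
      hint_sv.integrableOn
    intro ω hω
    obtain ⟨j, hjN, hj⟩ := hω
    exact stoppedValue_hittingBtwn_mem ⟨j, ⟨Nat.zero_le _, hjN⟩, hj⟩
  have hsetle : ∫ ω in A, stoppedValue M τ ω ∂μ ≤ ∫ ω, stoppedValue M τ ω ∂μ :=
    setIntegral_le_integral hint_sv
      (Filter.Eventually.of_forall fun ω => hpos _ ω)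
  have hfinal : (μ A).toReal ≤ 1/ε := by
    rw [le_div_iff₀ hε, mul_comm]
    exact le_trans hconst (le_trans hsetle hsv_le_one)
  rw [← ENNReal.ofReal_toReal (measure_ne_top μ A)]
  exact ENNReal.ofReal_le_ofReal hfinal

/-- Lemma F.4 of Dann et al.: time-uniform lower-tail bound for
adapted Bernoulli processes.  `X i` is `{0,1}`-valued, `F i`-measurable, and
`P i` is `F (i-1)`-measurable with `ℙ(X i = 1 | F (i-1)) = P i` a.s. (expressed
via the conditional expectation of the indicator-valued `X i`).  Then the
probability that for some `n ≥ 1` the running sum of `X` drops more than `W`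
below half the running sum of `P` is at most `exp (-W)`. -/
theorem stmt_4 {Ω : Type*} {m0 : MeasurableSpace Ω} (μ : Measure Ω)
    [IsProbabilityMeasure μ]
    (F : Filtration ℕ m0) (X P : ℕ → Ω → ℝ)
    (hX01 : ∀ i ω, X i ω = 0 ∨ X i ω = 1)
    (hXmeas : ∀ i, 1 ≤ i → @Measurable Ω ℝ (F i) _ (X i))
    (hPmeas : ∀ i, 1 ≤ i → @Measurable Ω ℝ (F (i - 1)) _ (P i))
    (hcond : ∀ i, 1 ≤ i → μ[X i | F (i - 1)] =ᵐ[μ] P i)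
    (W : ℝ) (hW : 0 < W) :
    μ {ω | ∃ n : ℕ, 1 ≤ n ∧
        ∑ t ∈ Finset.Icc 1 n, X t ω < (1/2 : ℝ) * ∑ t ∈ Finset.Icc 1 n, P t ω - W}
      ≤ ENNReal.ofReal (Real.exp (-W)) := by
  classical
  set c : ℝ := 1 - Real.exp (-1) with hc
  -- basic facts about X
  have hX0 : ∀ i ω, 0 ≤ X i ω := by
    intro i ω; rcases hX01 i ω with h | h <;> rw [h] <;> norm_num
  have hX1 : ∀ i ω, X i ω ≤ 1 := by
    intro i ω; rcases hX01 i ω with h | h <;> rw [h] <;> norm_num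
  have hXm0 : ∀ i, 1 ≤ i → Measurable (X i) :=
    fun i hi => (hXmeas i hi).le (F.le i)
  have hXint : ∀ i, 1 ≤ i → Integrable (X i) μ := by
    intro i hi
    refine Integrable.mono' (integrable_const (1:ℝ))
      (hXm0 i hi).aestronglyMeasurable
      (Filter.Eventually.of_forall fun ω => ?_)
    rw [Real.norm_eq_abs, abs_le]
    exact ⟨by linarith [hX0 i ω], hX1 i ω⟩
  -- almost-everywhere bounds on P
  have hPae : ∀ᵐ ω ∂μ, ∀ i, 1 ≤ i → 0 ≤ P i ω ∧ P i ω ≤ 1 := by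
    rw [ae_all_iff]
    intro i
    by_cases hi : 1 ≤ i
    · have h1 : (0:Ω → ℝ) ≤ᵐ[μ] μ[X i | F (i-1)] :=
        condExp_nonneg (Filter.Eventually.of_forall fun ω => hX0 i ω)
      have h2 : μ[X i | F (i-1)] ≤ᵐ[μ] μ[(fun _ => (1:ℝ)) | F (i-1)] :=
        condExp_mono (hXint i hi) (integrable_const 1)
          (Filter.Eventually.of_forall fun ω => hX1 i ω)
      have h3 : μ[(fun _ => (1:ℝ)) | F (i-1)] = fun _ => (1:ℝ) :=
        condExp_const (F.le (i-1)) 1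
      filter_upwards [h1, h2, hcond i hi] with ω hω1 hω2 hω3
      intro _
      rw [h3] at hω2
      constructor
      · rw [← hω3]; exact hω1
      · rw [← hω3]; exact hω2
    · exact Filter.Eventually.of_forall fun ω h => absurd h hi
  -- the exponential supermartingale
  set M : ℕ → Ω → ℝ :=
    fun n ω => Real.exp (∑ t ∈ Finset.Icc 1 n, ((1/2) * P t ω - X t ω)) with hM
  have hMpos : ∀ n ω, 0 < M n ω := fun n ω => Real.exp_pos _
  have hMmeas : ∀ n, Measurable[F n] (M n) := by
    intro n
    apply Real.measurable_exp.comp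
    apply Finset.measurable_sum
    intro t ht
    rw [Finset.mem_Icc] at ht
    have hP : Measurable[F n] (P t) :=
      (hPmeas t ht.1).le (F.mono (le_trans (Nat.sub_le t 1) ht.2))
    have hX : Measurable[F n] (X t) := (hXmeas t ht.1).le (F.mono ht.2)
    exact (hP.const_mul _).sub hX
  have hMint : ∀ n, Integrable (M n) μ := by
    intro n
    refine Integrable.mono' (integrable_const (Real.exp (n * (1/2))))
      (((hMmeas n).le (F.le n)).aestronglyMeasurable) ?_
    filter_upwards [hPae] with ω hω
    rw [Real.norm_eq_abs, abs_of_pos (hMpos n ω)]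
    apply Real.exp_le_exp.2
    calc ∑ t ∈ Finset.Icc 1 n, ((1/2) * P t ω - X t ω)
        ≤ ∑ _t ∈ Finset.Icc 1 n, (1/2 : ℝ) := by
          refine Finset.sum_le_sum fun t ht => ?_
          rw [Finset.mem_Icc] at ht
          have := (hω t ht.1).2
          have := hX0 t ω
          linarith
      _ = (n : ℝ) * (1/2) := by
          rw [Finset.sum_const, Nat.card_Icc]
          simp [nsmul_eq_mul]
      _ ≤ (n : ℝ) * (1/2) := le_refl _
  have hadp : StronglyAdapted F M := fun n => (hMmeas n).stronglyMeasurable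
  -- the supermartingale property
  have hsuper : Supermartingale M F μ := by
    refine supermartingale_nat hadp hMint fun i => ?_
    set G : Ω → ℝ := fun ω => M i ω * Real.exp ((1/2) * P (i+1) ω) with hG
    set H : Ω → ℝ := fun ω => 1 - c * X (i+1) ω with hH
    have hsucc : (i + 1) - 1 = i := by omega
    have hGH : M (i+1) = G * H := by
      funext ω
      have hsum : ∑ t ∈ Finset.Icc 1 (i+1), ((1/2) * P t ω - X t ω)
          = (∑ t ∈ Finset.Icc 1 i, ((1/2) * P t ω - X t ω))
            + ((1/2) * P (i+1) ω - X (i+1) ω) :=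
        Finset.sum_Icc_succ_top (Nat.one_le_iff_ne_zero.2 (Nat.succ_ne_zero i)) _
      have hexpX : Real.exp (-X (i+1) ω) = 1 - c * X (i+1) ω := by
        rcases hX01 (i+1) ω with h | h <;> rw [h] <;> simp [hc]
      show Real.exp _ = G ω * H ω
      rw [hsum, Real.exp_add, sub_eq_add_neg ((1/2) * P (i+1) ω), Real.exp_add,
        hexpX]
      simp [hG, hH, hM, mul_assoc]
    have hGmeas : StronglyMeasurable[F i] G := by
      have hP : Measurable[F i] (P (i+1)) := by
        have := hPmeas (i+1) (Nat.le_add_left 1 i)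
        rwa [hsucc] at this
      exact ((hMmeas i).mul (Real.measurable_exp.comp
        (hP.const_mul _))).stronglyMeasurable
    have hHint : Integrable H μ := by
      refine Integrable.mono' (integrable_const (1 + |c|))
        ?_ (Filter.Eventually.of_forall fun ω => ?_)
      · exact (measurable_const.sub
          ((hXm0 (i+1) (Nat.le_add_left 1 i)).const_mul c)).aestronglyMeasurable
      · rw [Real.norm_eq_abs]
        have h1 : |c * X (i+1) ω| ≤ |c| := by
          rw [abs_mul]
          have : |X (i+1) ω| ≤ 1 := by
            rw [abs_le]; exact ⟨by linarith [hX0 (i+1) ω], hX1 (i+1) ω⟩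
          nlinarith [abs_nonneg c]
        calc |1 - c * X (i+1) ω| ≤ |(1:ℝ)| + |c * X (i+1) ω| := abs_sub _ _
          _ ≤ 1 + |c| := by rw [abs_one]; linarith
    have hGHint : Integrable (G * H) μ := by rw [← hGH]; exact hMint (i+1)
    have hpull : μ[G * H | F i] =ᵐ[μ] G * μ[H | F i] :=
      condExp_mul_of_stronglyMeasurable_left hGmeas hGHint hHint
    have hcondH : μ[H | F i] =ᵐ[μ] fun ω => 1 - c * P (i+1) ω := by
      have hHeq : H = (fun _ => (1:ℝ)) - c • X (i+1) := by
        funext ω; simp [hH, smul_eq_mul]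
      rw [hHeq]
      have h1 := condExp_sub (μ := μ) (m := F i) (integrable_const (1:ℝ))
        ((hXint (i+1) (Nat.le_add_left 1 i)).smul c)
      refine h1.trans ?_
      have h2 := condExp_smul (μ := μ) (m := F i) c (X (i+1))
      have h3 : μ[X (i+1) | F i] =ᵐ[μ] P (i+1) := by
        have := hcond (i+1) (Nat.le_add_left 1 i)
        rwa [hsucc] at this
      filter_upwards [h2, h3] with ω hω2 hω3
      have hcc : (μ[(fun _ => (1:ℝ)) | F i]) = fun _ => (1:ℝ) :=
        condExp_const (F.le i) 1
      simp only [Pi.sub_apply, hcc]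
      rw [hω2]
      simp [hω3, smul_eq_mul]
    rw [hGH]
    have hfin : G * μ[H|F i] ≤ᵐ[μ] M i := by
      filter_upwards [hcondH, hPae] with ω hω1 hω2
      obtain ⟨hp0, hp1⟩ := hω2 (i+1) (Nat.le_add_left 1 i)
      show G ω * (μ[H|F i]) ω ≤ M i ω
      rw [hω1]
      have hkey := key_real (P (i+1) ω) hp0
      have heq : G ω * (1 - c * P (i+1) ω)
          = M i ω * (Real.exp (P (i+1) ω / 2) * (1 - c * P (i+1) ω)) := by
        show M i ω * Real.exp (1/2 * P (i+1) ω) * _ = _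
        rw [mul_comm (1/2 : ℝ) (P (i+1) ω), mul_one_div, mul_assoc]
      rw [heq]
      calc M i ω * (Real.exp (P (i+1) ω / 2) * (1 - c * P (i+1) ω))
          ≤ M i ω * 1 := mul_le_mul_of_nonneg_left hkey (hMpos i ω).le
        _ = M i ω := mul_one _
    exact hpull.le.trans hfin
  -- conclude via Ville's inequality
  set A : ℕ → Set Ω := fun N => {ω | ∃ j ≤ N, Real.exp W ≤ M j ω} with hAdef
  have hsub : {ω | ∃ n : ℕ, 1 ≤ n ∧
      ∑ t ∈ Finset.Icc 1 n, X t ω < (1/2 : ℝ) * ∑ t ∈ Finset.Icc 1 n, P t ω - W}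
      ⊆ ⋃ N : ℕ, A N := by
    intro ω hω
    obtain ⟨n, _hn1, hn⟩ := hω
    refine Set.mem_iUnion.2 ⟨n, n, le_refl n, ?_⟩
    apply Real.exp_le_exp.2
    have hsum : ∑ t ∈ Finset.Icc 1 n, ((1/2 : ℝ) * P t ω - X t ω)
        = (1/2 : ℝ) * ∑ t ∈ Finset.Icc 1 n, P t ω - ∑ t ∈ Finset.Icc 1 n, X t ω := by
      rw [Finset.sum_sub_distrib, Finset.mul_sum]
    show W ≤ ∑ t ∈ Finset.Icc 1 n, ((1/2 : ℝ) * P t ω - X t ω)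
    rw [hsum]; linarith
  have hdir : Directed (· ⊆ ·) A := by
    refine (Monotone.directed_le ?_)
    intro N N' hNN' ω hω
    obtain ⟨j, hj, hj'⟩ := hω
    exact ⟨j, le_trans hj hNN', hj'⟩
  calc μ {ω | ∃ n : ℕ, 1 ≤ n ∧
        ∑ t ∈ Finset.Icc 1 n, X t ω < (1/2 : ℝ) * ∑ t ∈ Finset.Icc 1 n, P t ω - W}
      ≤ μ (⋃ N : ℕ, A N) := measure_mono hsub
    _ = ⨆ N : ℕ, μ (A N) := hdir.measure_iUnion
    _ ≤ ENNReal.ofReal (1 / Real.exp W) := by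
        refine iSup_le fun N => ?_
        exact ville_fin μ F M hsuper (fun n ω => (hMpos n ω).le)
          (fun ω => by simp [hM]) (Real.exp W) (Real.exp_pos W) N
    _ = ENNReal.ofReal (Real.exp (-W)) := by rw [Real.exp_neg, one_div]
end

section
/- Let H ≥ 2 and let P' and P'' be transition kernels on S ∪ {s†} with P'_h(s†|s†,a) = P''_h(s†|s†,a) = 1 for all h, a, such that P' is (1/H)-multiplicatively accurate to P''. Then for every policy π on S ∪ {s†}, every h ∈ {1,…,H}, every s ∈ S, and every a ∈ A: (1/4)·V^π(1_{h,s,a},P') ≤ V^π(1_{h,s,a},P'') ≤ 3·V^π(1_{h,s,a},P'). -/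
/-- The state-visitation distribution `d^{π,P}` of a policy `π` and transition
kernel `P` in a finite-horizon MDP with initial state `s₁`.  Index `h` is
0-based: `visit s₁ π P (h-1) x = d^{π,P}_h(x)` for the 1-based step `h`. -/
def visit {X A : Type*} [Fintype X] [Fintype A] [DecidableEq X] (s₁ : X)
    (π : ℕ → X → A → ℝ) (P : ℕ → X → A → X → ℝ) : ℕ → X → ℝ
  | 0 => fun x => if x = s₁ then 1 else 0
  | h + 1 => fun x' => ∑ x : X, ∑ a : A, visit s₁ π P h x * π h x a * P h x a x'

lemma visit_nonneg' {X A : Type*} [Fintype X] [Fintype A] [DecidableEq X] (s₁ : X)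
    (π : ℕ → X → A → ℝ) (P : ℕ → X → A → X → ℝ) (N : ℕ)
    (hπ : ∀ h < N, ∀ x a, 0 ≤ π h x a) (hP : ∀ h < N, ∀ x a x', 0 ≤ P h x a x') :
    ∀ h ≤ N, ∀ x, 0 ≤ visit s₁ π P h x := by
  intro h
  induction h with
  | zero => intro _ x; simp only [visit]; split <;> norm_num
  | succ h ih =>
    intro hle x'
    have hhN : h < N := Nat.lt_of_succ_le hle
    simp only [visit]
    refine Finset.sum_nonneg fun x _ => Finset.sum_nonneg fun a _ => ?_
    exact mul_nonneg (mul_nonneg (ih (le_of_lt hhN) x) (hπ h hhN x a)) (hP h hhN x a x')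

lemma pow_one_add_le_three (H : ℕ) (hH : 1 ≤ H) (h : ℕ) (hh : h ≤ H) :
    (1 + 1/(H:ℝ))^h ≤ 3 := by
  have hHpos : (0:ℝ) < H := by exact_mod_cast Nat.lt_of_lt_of_le Nat.zero_lt_one hH
  have h1 : (1 + 1/(H:ℝ))^h ≤ (1 + 1/(H:ℝ))^H := by
    apply pow_le_pow_right₀ _ hh
    have : 0 < 1/(H:ℝ) := by positivity
    linarith
  have h2 : (1 + 1/(H:ℝ))^H ≤ Real.exp (1/(H:ℝ)) ^ H :=
    pow_le_pow_left₀ (by positivity) (Real.add_one_le_exp _ |>.trans_eq' (by ring)) _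
  have h3 : Real.exp (1/(H:ℝ)) ^ H = Real.exp 1 := by
    rw [← Real.exp_nat_mul]
    congr 1
    field_simp
  have h4 : Real.exp 1 < 3 := by
    have := Real.exp_one_lt_d9
    linarith
  linarith

lemma quarter_le_pow_one_sub (H : ℕ) (hH : 2 ≤ H) (h : ℕ) (hh : h < H) :
    (1/4 : ℝ) ≤ (1 - 1/(H:ℝ))^h := by
  have hHpos : (0:ℝ) < H := by exact_mod_cast Nat.lt_of_lt_of_le Nat.zero_lt_two hH
  have hH1 : (1:ℝ) < H := by exact_mod_cast Nat.lt_of_lt_of_le Nat.one_lt_two hH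
  have hc0 : (0:ℝ) ≤ 1 - 1/(H:ℝ) := by
    have : 1/(H:ℝ) ≤ 1 := by rw [div_le_one hHpos]; linarith
    linarith
  have hc1 : (1:ℝ) - 1/(H:ℝ) ≤ 1 := by
    have : (0:ℝ) < 1/(H:ℝ) := by positivity
    linarith
  have hstep : (1 - 1/(H:ℝ)) ^ (H-1) ≤ (1 - 1/(H:ℝ)) ^ h :=
    pow_le_pow_of_le_one hc0 hc1 (by omega)
  have hcast : ((H - 1 : ℕ) : ℝ) = (H:ℝ) - 1 := by
    have := Nat.cast_sub (by omega : 1 ≤ H) (R := ℝ)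
    simpa using this
  have hne : (H:ℝ) - 1 ≠ 0 := by linarith
  have hd : (0:ℝ) < 1/((H:ℝ)-1) := div_pos one_pos (by linarith)
  have hcx : (1 - 1/(H:ℝ)) * (1 + 1/((H:ℝ)-1)) = 1 := by
    field_simp
    ring
  have hxpow : (1 + 1/((H:ℝ)-1)) ^ (H - 1) ≤ 4 := by
    have h2 : (1 + 1/((H:ℝ)-1)) ^ (H-1) ≤ Real.exp (1/((H:ℝ)-1)) ^ (H-1) :=
      pow_le_pow_left₀ (by linarith) (Real.add_one_le_exp _ |>.trans_eq' (by ring)) _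
    have h3 : Real.exp (1/((H:ℝ)-1)) ^ (H-1) = Real.exp 1 := by
      rw [← Real.exp_nat_mul, hcast]
      congr 1
      field_simp
    have h4 : Real.exp 1 < 4 := by
      have := Real.exp_one_lt_d9
      linarith
    linarith
  have hxpos : (0:ℝ) < 1 + 1/((H:ℝ)-1) := by linarith
  have hcm : (1 - 1/(H:ℝ)) ^ (H-1) * (1 + 1/((H:ℝ)-1)) ^ (H-1) = 1 := by
    rw [← mul_pow, hcx, one_pow]
  have hxp : (0:ℝ) < (1 + 1/((H:ℝ)-1)) ^ (H-1) := pow_pos hxpos _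
  nlinarith [hstep, hcm, hxp, hxpow]

/-- From an absorbing state, the probability of reaching any non-absorbing
state is zero. -/
lemma absorb_zero {S A : Type*} [Fintype S] [Fintype A]
    (P : ℕ → S ⊕ Unit → A → S ⊕ Unit → ℝ) (h : ℕ)
    (hnn : ∀ x a x', 0 ≤ P h x a x')
    (hsum : ∀ x a, ∑ x', P h x a x' = 1)
    (habs : ∀ a, P h (Sum.inr ()) a (Sum.inr ()) = 1)
    (a : A) (s' : S) : P h (Sum.inr ()) a (Sum.inl s') = 0 := by
  have hs := hsum (Sum.inr ()) a
  simp only [Fintype.sum_sum_type] at hs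
  have hu : ∑ u : Unit, P h (Sum.inr ()) a (Sum.inr u) = 1 := by
    simp [habs a]
  have hz : ∑ t : S, P h (Sum.inr ()) a (Sum.inl t) = 0 := by linarith
  have := (Finset.sum_eq_zero_iff_of_nonneg
    (fun t _ => hnn (Sum.inr ()) a (Sum.inl t))).mp hz
  exact this s' (Finset.mem_univ s')

/-- if `P'` is `(1/H)`-multiplicatively accurate to `P''` (both
transition kernels on `S ⊕ {s†}` with absorbing `s†`), then for every policy
`π`, every step `h ∈ {1,…,H}` (0-indexed: `h < H`), state `s ∈ S` and action
`a`, the visitation probabilities satisfy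
`(1/4) V^π(1_{h,s,a},P') ≤ V^π(1_{h,s,a},P'') ≤ 3 V^π(1_{h,s,a},P')`. -/
theorem stmt_8 {S A : Type*} [Fintype S] [Fintype A] [DecidableEq S]
    [Nonempty S] [Nonempty A]
    (H : ℕ) (hH : 2 ≤ H) (s₁ : S)
    (P' P'' : ℕ → S ⊕ Unit → A → S ⊕ Unit → ℝ)
    (π : ℕ → S ⊕ Unit → A → ℝ)
    (hP'nn : ∀ h < H, ∀ x a x', 0 ≤ P' h x a x')
    (hP'sum : ∀ h < H, ∀ x a, ∑ x', P' h x a x' = 1)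
    (hP''nn : ∀ h < H, ∀ x a x', 0 ≤ P'' h x a x')
    (hP''sum : ∀ h < H, ∀ x a, ∑ x', P'' h x a x' = 1)
    (hP'abs : ∀ h < H, ∀ a, P' h (Sum.inr ()) a (Sum.inr ()) = 1)
    (hP''abs : ∀ h < H, ∀ a, P'' h (Sum.inr ()) a (Sum.inr ()) = 1)
    (hπnn : ∀ h < H, ∀ x a, 0 ≤ π h x a)
    (hπsum : ∀ h < H, ∀ x, ∑ a, π h x a = 1)
    (hacc : ∀ h < H, ∀ (s : S) (a : A) (s' : S),
      (1 - 1/(H : ℝ)) * P' h (Sum.inl s) a (Sum.inl s') ≤ P'' h (Sum.inl s) a (Sum.inl s') ∧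
      P'' h (Sum.inl s) a (Sum.inl s') ≤ (1 + 1/(H : ℝ)) * P' h (Sum.inl s) a (Sum.inl s'))
    (h : ℕ) (hh : h < H) (s : S) (a : A) :
    (1/4 : ℝ) * (visit (Sum.inl s₁) π P' h (Sum.inl s) * π h (Sum.inl s) a)
        ≤ visit (Sum.inl s₁) π P'' h (Sum.inl s) * π h (Sum.inl s) a ∧
      visit (Sum.inl s₁) π P'' h (Sum.inl s) * π h (Sum.inl s) a
        ≤ 3 * (visit (Sum.inl s₁) π P' h (Sum.inl s) * π h (Sum.inl s) a) := by
  have hHpos : (0:ℝ) < H := by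
    have : 0 < H := by omega
    exact_mod_cast this
  set c : ℝ := 1 - 1/(H:ℝ) with hcdef
  set C : ℝ := 1 + 1/(H:ℝ) with hCdef
  have hc0 : 0 ≤ c := by
    rw [hcdef]
    have : 1/(H:ℝ) ≤ 1 := by
      rw [div_le_one hHpos]
      have : (1:ℝ) ≤ H := by exact_mod_cast Nat.one_le_of_lt hH
      linarith
    linarith
  have hC0 : 0 ≤ C := by
    rw [hCdef]; positivity
  have hv'nn := visit_nonneg' (Sum.inl s₁ : S ⊕ Unit) π P' H hπnn hP'nn
  have hv''nn := visit_nonneg' (Sum.inl s₁ : S ⊕ Unit) π P'' H hπnn hP''nn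
  -- main comparison, by induction
  have key : ∀ k ≤ H, ∀ t : S,
      c ^ k * visit (Sum.inl s₁) π P' k (Sum.inl t) ≤ visit (Sum.inl s₁) π P'' k (Sum.inl t) ∧
      visit (Sum.inl s₁) π P'' k (Sum.inl t) ≤ C ^ k * visit (Sum.inl s₁) π P' k (Sum.inl t) := by
    intro k
    induction k with
    | zero =>
      intro _ t
      simp [visit]
    | succ k ih =>
      intro hkle t
      have hkH : k < H := Nat.lt_of_succ_le hkle
      have ih' := ih (le_of_lt hkH)
      simp only [visit]
      simp only [Fintype.sum_sum_type]
      have hinr' : ∑ u : Unit, ∑ b : A,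
          visit (Sum.inl s₁) π P' k (Sum.inr u) * π k (Sum.inr u) b * P' k (Sum.inr u) b (Sum.inl t) = 0 := by
        refine Finset.sum_eq_zero fun u _ => Finset.sum_eq_zero fun b _ => ?_
        have : P' k (Sum.inr u) b (Sum.inl t) = 0 :=
          absorb_zero P' k (hP'nn k hkH) (hP'sum k hkH) (hP'abs k hkH) b t
        rw [this, mul_zero]
      have hinr'' : ∑ u : Unit, ∑ b : A,
          visit (Sum.inl s₁) π P'' k (Sum.inr u) * π k (Sum.inr u) b * P'' k (Sum.inr u) b (Sum.inl t) = 0 := by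
        refine Finset.sum_eq_zero fun u _ => Finset.sum_eq_zero fun b _ => ?_
        have : P'' k (Sum.inr u) b (Sum.inl t) = 0 :=
          absorb_zero P'' k (hP''nn k hkH) (hP''sum k hkH) (hP''abs k hkH) b t
        rw [this, mul_zero]
      rw [hinr', hinr'', add_zero, add_zero, Finset.mul_sum, Finset.mul_sum]
      constructor
      · refine Finset.sum_le_sum fun x _ => ?_
        rw [Finset.mul_sum]
        refine Finset.sum_le_sum fun b _ => ?_
        have hvl := (ih' x).1
        have haccl := (hacc k hkH x b t).1
        have hπ := hπnn k hkH (Sum.inl x) b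
        have hP'n := hP'nn k hkH (Sum.inl x) b (Sum.inl t)
        have hv'' := hv''nn k (le_of_lt hkH) (Sum.inl x)
        have hv' := hv'nn k (le_of_lt hkH) (Sum.inl x)
        have e1 : c ^ (k+1) * (visit (Sum.inl s₁) π P' k (Sum.inl x) * π k (Sum.inl x) b * P' k (Sum.inl x) b (Sum.inl t))
            = (c ^ k * visit (Sum.inl s₁) π P' k (Sum.inl x)) * (π k (Sum.inl x) b * (c * P' k (Sum.inl x) b (Sum.inl t))) := by
          ring
        rw [e1]
        have t1 : (c ^ k * visit (Sum.inl s₁) π P' k (Sum.inl x)) * (π k (Sum.inl x) b * (c * P' k (Sum.inl x) b (Sum.inl t)))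
            ≤ visit (Sum.inl s₁) π P'' k (Sum.inl x) * (π k (Sum.inl x) b * (c * P' k (Sum.inl x) b (Sum.inl t))) :=
          mul_le_mul_of_nonneg_right hvl (mul_nonneg hπ (mul_nonneg hc0 hP'n))
        have t2 : visit (Sum.inl s₁) π P'' k (Sum.inl x) * (π k (Sum.inl x) b * (c * P' k (Sum.inl x) b (Sum.inl t)))
            ≤ visit (Sum.inl s₁) π P'' k (Sum.inl x) * (π k (Sum.inl x) b * P'' k (Sum.inl x) b (Sum.inl t)) :=
          mul_le_mul_of_nonneg_left (mul_le_mul_of_nonneg_left haccl hπ) hv''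
        calc _ ≤ _ := t1
          _ ≤ _ := t2
          _ = visit (Sum.inl s₁) π P'' k (Sum.inl x) * π k (Sum.inl x) b * P'' k (Sum.inl x) b (Sum.inl t) := by ring
      · refine Finset.sum_le_sum fun x _ => ?_
        rw [Finset.mul_sum]
        refine Finset.sum_le_sum fun b _ => ?_
        have hvu := (ih' x).2
        have haccu := (hacc k hkH x b t).2
        have hπ := hπnn k hkH (Sum.inl x) b
        have hP'n := hP'nn k hkH (Sum.inl x) b (Sum.inl t)
        have hP''n := hP''nn k hkH (Sum.inl x) b (Sum.inl t)
        have hv'' := hv''nn k (le_of_lt hkH) (Sum.inl x)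
        have hv' := hv'nn k (le_of_lt hkH) (Sum.inl x)
        have t1 : visit (Sum.inl s₁) π P'' k (Sum.inl x) * π k (Sum.inl x) b * P'' k (Sum.inl x) b (Sum.inl t)
            ≤ (C ^ k * visit (Sum.inl s₁) π P' k (Sum.inl x)) * π k (Sum.inl x) b * P'' k (Sum.inl x) b (Sum.inl t) :=
          mul_le_mul_of_nonneg_right (mul_le_mul_of_nonneg_right hvu hπ) hP''n
        have t2 : (C ^ k * visit (Sum.inl s₁) π P' k (Sum.inl x)) * π k (Sum.inl x) b * P'' k (Sum.inl x) b (Sum.inl t)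
            ≤ (C ^ k * visit (Sum.inl s₁) π P' k (Sum.inl x)) * π k (Sum.inl x) b * (C * P' k (Sum.inl x) b (Sum.inl t)) :=
          mul_le_mul_of_nonneg_left haccu
            (mul_nonneg (mul_nonneg (pow_nonneg hC0 k) hv') hπ)
        calc _ ≤ _ := t1
          _ ≤ _ := t2
          _ = C ^ (k+1) * (visit (Sum.inl s₁) π P' k (Sum.inl x) * π k (Sum.inl x) b * P' k (Sum.inl x) b (Sum.inl t)) := by ring
  obtain ⟨kl, ku⟩ := key h (le_of_lt hh) s
  have hπa := hπnn h hh (Sum.inl s) a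
  have hv' := hv'nn h (le_of_lt hh) (Sum.inl s)
  have hq : (1/4 : ℝ) ≤ c ^ h := quarter_le_pow_one_sub H hH h hh
  have h3 : C ^ h ≤ 3 := pow_one_add_le_three H (by omega) h (le_of_lt hh)
  constructor
  · have : (1/4 : ℝ) * visit (Sum.inl s₁) π P' h (Sum.inl s)
        ≤ c ^ h * visit (Sum.inl s₁) π P' h (Sum.inl s) :=
      mul_le_mul_of_nonneg_right hq hv'
    have h1 : (1/4 : ℝ) * visit (Sum.inl s₁) π P' h (Sum.inl s)
        ≤ visit (Sum.inl s₁) π P'' h (Sum.inl s) := le_trans this kl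
    calc (1/4 : ℝ) * (visit (Sum.inl s₁) π P' h (Sum.inl s) * π h (Sum.inl s) a)
        = ((1/4 : ℝ) * visit (Sum.inl s₁) π P' h (Sum.inl s)) * π h (Sum.inl s) a := by ring
      _ ≤ visit (Sum.inl s₁) π P'' h (Sum.inl s) * π h (Sum.inl s) a :=
        mul_le_mul_of_nonneg_right h1 hπa
  · have : C ^ h * visit (Sum.inl s₁) π P' h (Sum.inl s)
        ≤ 3 * visit (Sum.inl s₁) π P' h (Sum.inl s) :=
      mul_le_mul_of_nonneg_right h3 hv'
    have h1 : visit (Sum.inl s₁) π P'' h (Sum.inl s)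
        ≤ 3 * visit (Sum.inl s₁) π P' h (Sum.inl s) := le_trans ku this
    calc visit (Sum.inl s₁) π P'' h (Sum.inl s) * π h (Sum.inl s) a
        ≤ (3 * visit (Sum.inl s₁) π P' h (Sum.inl s)) * π h (Sum.inl s) a :=
        mul_le_mul_of_nonneg_right h1 hπa
      _ = 3 * (visit (Sum.inl s₁) π P' h (Sum.inl s) * π h (Sum.inl s) a) := by ring
end

section
/- Let P be a transition kernel on S, let F ⊆ {1,…,H}×S×A×S, and let P̃ be the associated absorbing MDP on S ∪ {s†}. Let r be a reward function on S with r_h(s,a) ∈ [0,1] for all h,s,a, extended to s† by r_h(s†,a) = 0. Then for every policy π on S: 0 ≤ V^π(r,P) − V^π(r,P̃) ≤ H · d^{π,P̃}_{H+1}(s†). -/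
/-- The value `V^π(r,P) = ∑_{h=1}^{H} ∑_{x,a} d^{π,P}_h(x) π_h(a|x) r_h(x,a)`. -/
def valueOf {X A : Type*} [Fintype X] [Fintype A] [DecidableEq X]
    (H : ℕ) (s₁ : X) (π : ℕ → X → A → ℝ) (P : ℕ → X → A → X → ℝ)
    (r : ℕ → X → A → ℝ) : ℝ :=
  ∑ h ∈ Finset.range H, ∑ x : X, ∑ a : A, visit s₁ π P h x * π h x a * r h x a

open Classical in
/-- The absorbing MDP `P̃` on `S ⊕ {s†}` associated with a transition kernel
`P` on `S` and a set of infrequent tuples `F`. -/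
noncomputable def absorb {S A : Type*} [Fintype S]
    (P : ℕ → S → A → S → ℝ) (F : Set (ℕ × S × A × S)) :
    ℕ → S ⊕ Unit → A → S ⊕ Unit → ℝ :=
  fun h x a x' =>
    match x, x' with
    | Sum.inl s, Sum.inl s' => if (h, s, a, s') ∈ F then 0 else P h s a s'
    | Sum.inl s, Sum.inr _ => ∑ s' : S, if (h, s, a, s') ∈ F then P h s a s' else 0
    | Sum.inr _, Sum.inl _ => 0
    | Sum.inr _, Sum.inr _ => 1

/-- for a reward `r` with values in `[0,1]` (extended by `0` at
the absorbing state), `0 ≤ V^π(r,P) - V^π(r,P̃) ≤ H · d^{π,P̃}_{H+1}(s†)`. -/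
theorem stmt_11 {S A : Type*} [Fintype S] [Fintype A] [DecidableEq S]
    [Nonempty S] [Nonempty A]
    (H : ℕ) (hH : 1 ≤ H) (s₁ : S)
    (P : ℕ → S → A → S → ℝ)
    (hPnn : ∀ h < H, ∀ s a s', 0 ≤ P h s a s')
    (hPsum : ∀ h < H, ∀ s a, ∑ s', P h s a s' = 1)
    (F : Set (ℕ × S × A × S))
    (r : ℕ → S → A → ℝ)
    (hr : ∀ h < H, ∀ s a, r h s a ∈ Set.Icc (0 : ℝ) 1)
    (π : ℕ → S → A → ℝ)
    (hπnn : ∀ h < H, ∀ s a, 0 ≤ π h s a)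
    (hπsum : ∀ h < H, ∀ s, ∑ a, π h s a = 1)
    (πe : ℕ → S ⊕ Unit → A → ℝ)
    (hπe : ∀ h s, πe h (Sum.inl s) = π h s)
    (hπenn : ∀ h < H, ∀ a, 0 ≤ πe h (Sum.inr ()) a)
    (hπesum : ∀ h < H, ∑ a, πe h (Sum.inr ()) a = 1) :
    0 ≤ valueOf H s₁ π P r -
        valueOf H (Sum.inl s₁) πe (absorb P F)
          (fun h x a => match x with | Sum.inl s => r h s a | Sum.inr _ => 0) ∧
      valueOf H s₁ π P r -
        valueOf H (Sum.inl s₁) πe (absorb P F)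
          (fun h x a => match x with | Sum.inl s => r h s a | Sum.inr _ => 0)
        ≤ (H : ℝ) * visit (Sum.inl s₁) πe (absorb P F) H (Sum.inr ()) := by
  classical
  set Q := absorb P F with hQdef
  set rQ : ℕ → S ⊕ Unit → A → ℝ :=
    (fun h x a => match x with | Sum.inl s => r h s a | Sum.inr _ => 0) with hrQ
  -- basic facts about Q
  have hQnn : ∀ h < H, ∀ x a x', 0 ≤ Q h x a x' := by
    intro h hh x a x'
    rcases x with s | u <;> rcases x' with s' | u' <;> simp only [hQdef, absorb]
    · split_ifs with hF
      · exact le_rfl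
      · exact hPnn h hh s a s'
    · refine Finset.sum_nonneg fun s' _ => ?_
      split_ifs with hF
      · exact hPnn h hh s a s'
      · exact le_rfl
    · exact le_rfl
    · exact zero_le_one
  have hQle : ∀ h < H, ∀ s a s', Q h (Sum.inl s) a (Sum.inl s') ≤ P h s a s' := by
    intro h hh s a s'
    simp only [hQdef, absorb]
    split_ifs with hF
    · exact hPnn h hh s a s'
    · exact le_rfl
  have hQsum : ∀ h < H, ∀ x a, ∑ x' : S ⊕ Unit, Q h x a x' = 1 := by
    intro h hh x a
    rcases x with s | u
    · rw [Fintype.sum_sum_type]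
      simp only [hQdef, absorb, Finset.univ_unique, Finset.sum_singleton]
      rw [← Finset.sum_add_distrib]
      rw [← hPsum h hh s a]
      refine Finset.sum_congr rfl fun s' _ => ?_
      split_ifs <;> ring
    · rw [Fintype.sum_sum_type]
      simp [hQdef, absorb]
  have hπenn' : ∀ h < H, ∀ x a, 0 ≤ πe h x a := by
    intro h hh x a
    rcases x with s | u
    · rw [hπe]; exact hπnn h hh s a
    · cases u; exact hπenn h hh a
  have hπesum' : ∀ h < H, ∀ x, ∑ a, πe h x a = 1 := by
    intro h hh x
    rcases x with s | u
    · simp only [hπe]; exact hπsum h hh s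
    · cases u; exact hπesum h hh
  -- nonnegativity of visitation distributions
  have hvPnn : ∀ h ≤ H, ∀ s, 0 ≤ visit s₁ π P h s := by
    intro h
    induction h with
    | zero =>
      intro _ s
      simp only [visit]
      split_ifs <;> norm_num
    | succ n ih =>
      intro hle s
      have hn : n < H := Nat.lt_of_lt_of_le (Nat.lt_succ_self n) hle
      simp only [visit]
      refine Finset.sum_nonneg fun x _ => Finset.sum_nonneg fun a _ => ?_
      exact mul_nonneg (mul_nonneg (ih hn.le x) (hπnn n hn x a)) (hPnn n hn x a s)
  have hvQnn : ∀ h ≤ H, ∀ x, 0 ≤ visit (Sum.inl s₁) πe Q h x := by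
    intro h
    induction h with
    | zero =>
      intro _ x
      simp only [visit]
      split_ifs <;> norm_num
    | succ n ih =>
      intro hle x
      have hn : n < H := Nat.lt_of_lt_of_le (Nat.lt_succ_self n) hle
      simp only [visit]
      refine Finset.sum_nonneg fun y _ => Finset.sum_nonneg fun a _ => ?_
      exact mul_nonneg (mul_nonneg (ih hn.le y) (hπenn' n hn y a)) (hQnn n hn y a x)
  -- visitation domination
  have hle : ∀ h ≤ H, ∀ s, visit (Sum.inl s₁) πe Q h (Sum.inl s) ≤ visit s₁ π P h s := by
    intro h
    induction h with
    | zero =>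
      intro _ s
      simp only [visit, Sum.inl.injEq]
      split_ifs <;> norm_num
    | succ n ih =>
      intro hlee s'
      have hn : n < H := Nat.lt_of_lt_of_le (Nat.lt_succ_self n) hlee
      simp only [visit]
      rw [Fintype.sum_sum_type]
      have h2 : ∑ u : Unit, ∑ a : A,
          visit (Sum.inl s₁) πe Q n (Sum.inr u) * πe n (Sum.inr u) a *
            Q n (Sum.inr u) a (Sum.inl s') = 0 := by
        simp [hQdef, absorb]
      rw [h2, add_zero]
      refine Finset.sum_le_sum fun s _ => Finset.sum_le_sum fun a _ => ?_
      rw [hπe]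
      have hA : visit (Sum.inl s₁) πe Q n (Sum.inl s) * π n s a ≤
          visit s₁ π P n s * π n s a :=
        mul_le_mul_of_nonneg_right (ih hn.le s) (hπnn n hn s a)
      exact mul_le_mul hA (hQle n hn s a s') (hQnn n hn (Sum.inl s) a (Sum.inl s'))
        (mul_nonneg (hvPnn n hn.le s) (hπnn n hn s a))
  -- total mass of visitation distributions
  have hsumP : ∀ h ≤ H, ∑ s : S, visit s₁ π P h s = 1 := by
    intro h
    induction h with
    | zero => intro _; simp [visit]
    | succ n ih =>
      intro hlee
      have hn : n < H := Nat.lt_of_lt_of_le (Nat.lt_succ_self n) hlee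
      simp only [visit]
      calc ∑ s' : S, ∑ x : S, ∑ a : A, visit s₁ π P n x * π n x a * P n x a s'
          = ∑ x : S, ∑ a : A, ∑ s' : S, visit s₁ π P n x * π n x a * P n x a s' := by
            rw [Finset.sum_comm]
            exact Finset.sum_congr rfl fun x _ => Finset.sum_comm
        _ = ∑ x : S, ∑ a : A, visit s₁ π P n x * π n x a := by
            refine Finset.sum_congr rfl fun x _ => Finset.sum_congr rfl fun a _ => ?_
            rw [← Finset.mul_sum, hPsum n hn x a, mul_one]
        _ = ∑ x : S, visit s₁ π P n x := by
            refine Finset.sum_congr rfl fun x _ => ?_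
            rw [← Finset.mul_sum, hπsum n hn x, mul_one]
        _ = 1 := ih hn.le
  have hsumQ : ∀ h ≤ H, ∑ x : S ⊕ Unit, visit (Sum.inl s₁) πe Q h x = 1 := by
    intro h
    induction h with
    | zero => intro _; simp [visit]
    | succ n ih =>
      intro hlee
      have hn : n < H := Nat.lt_of_lt_of_le (Nat.lt_succ_self n) hlee
      simp only [visit]
      calc ∑ x' : S ⊕ Unit, ∑ x : S ⊕ Unit, ∑ a : A,
            visit (Sum.inl s₁) πe Q n x * πe n x a * Q n x a x'
          = ∑ x : S ⊕ Unit, ∑ a : A, ∑ x' : S ⊕ Unit,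
            visit (Sum.inl s₁) πe Q n x * πe n x a * Q n x a x' := by
            rw [Finset.sum_comm]
            exact Finset.sum_congr rfl fun x _ => Finset.sum_comm
        _ = ∑ x : S ⊕ Unit, ∑ a : A, visit (Sum.inl s₁) πe Q n x * πe n x a := by
            refine Finset.sum_congr rfl fun x _ => Finset.sum_congr rfl fun a _ => ?_
            rw [← Finset.mul_sum, hQsum n hn x a, mul_one]
        _ = ∑ x : S ⊕ Unit, visit (Sum.inl s₁) πe Q n x := by
            refine Finset.sum_congr rfl fun x _ => ?_
            rw [← Finset.mul_sum, hπesum' n hn x, mul_one]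
        _ = 1 := ih hn.le
  -- monotonicity of the absorbing mass
  have hmono : ∀ h < H, visit (Sum.inl s₁) πe Q h (Sum.inr ()) ≤
      visit (Sum.inl s₁) πe Q (h + 1) (Sum.inr ()) := by
    intro h hh
    have key : (visit (Sum.inl s₁) πe Q (h + 1) (Sum.inr ()) : ℝ)
        = (∑ s : S, ∑ a : A, visit (Sum.inl s₁) πe Q h (Sum.inl s) * πe h (Sum.inl s) a *
            Q h (Sum.inl s) a (Sum.inr ())) + visit (Sum.inl s₁) πe Q h (Sum.inr ()) := by
      show (∑ x : S ⊕ Unit, ∑ a : A, visit (Sum.inl s₁) πe Q h x * πe h x a *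
          Q h x a (Sum.inr ())) = _
      rw [Fintype.sum_sum_type]
      congr 1
      simp only [Finset.univ_unique, Finset.sum_singleton]
      have : ∀ a : A, visit (Sum.inl s₁) πe Q h (Sum.inr default) * πe h (Sum.inr default) a *
          Q h (Sum.inr default) a (Sum.inr ()) =
          visit (Sum.inl s₁) πe Q h (Sum.inr ()) * πe h (Sum.inr ()) a := by
        intro a
        simp [hQdef, absorb]
      rw [Finset.sum_congr rfl fun a _ => this a, ← Finset.mul_sum, hπesum h hh, mul_one]
    rw [key]
    have : 0 ≤ ∑ s : S, ∑ a : A, visit (Sum.inl s₁) πe Q h (Sum.inl s) * πe h (Sum.inl s) a *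
        Q h (Sum.inl s) a (Sum.inr ()) :=
      Finset.sum_nonneg fun s _ => Finset.sum_nonneg fun a _ =>
        mul_nonneg (mul_nonneg (hvQnn h hh.le (Sum.inl s)) (hπenn' h hh (Sum.inl s) a))
          (hQnn h hh (Sum.inl s) a (Sum.inr ()))
    linarith
  have dle : ∀ n, n ≤ H → ∀ m, m ≤ n → visit (Sum.inl s₁) πe Q m (Sum.inr ()) ≤
      visit (Sum.inl s₁) πe Q n (Sum.inr ()) := by
    intro n
    induction n with
    | zero =>
      intro _ m hm
      have : m = 0 := Nat.le_zero.mp hm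
      rw [this]
    | succ k ih =>
      intro hk m hm
      rcases Nat.lt_succ_iff_lt_or_eq.mp (Nat.lt_succ_of_le hm) with h' | h'
      · exact (ih (by omega) m (by omega)).trans (hmono k (by omega))
      · rw [h']
  -- rewriting the absorbing value
  have hVQ : valueOf H (Sum.inl s₁) πe Q rQ
      = ∑ h ∈ Finset.range H, ∑ s : S, ∑ a : A,
          visit (Sum.inl s₁) πe Q h (Sum.inl s) * π h s a * r h s a := by
    unfold valueOf
    refine Finset.sum_congr rfl fun h hh => ?_
    rw [Fintype.sum_sum_type]
    have h2 : ∑ u : Unit, ∑ a : A, visit (Sum.inl s₁) πe Q h (Sum.inr u) * πe h (Sum.inr u) a *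
        rQ h (Sum.inr u) a = 0 := by
      simp [hrQ]
    rw [h2, add_zero]
    refine Finset.sum_congr rfl fun s _ => Finset.sum_congr rfl fun a _ => ?_
    rw [hπe]
  have hdiff : valueOf H s₁ π P r - valueOf H (Sum.inl s₁) πe Q rQ
      = ∑ h ∈ Finset.range H, ∑ s : S, ∑ a : A,
          (visit s₁ π P h s - visit (Sum.inl s₁) πe Q h (Sum.inl s)) * π h s a * r h s a := by
    rw [hVQ]
    unfold valueOf
    rw [← Finset.sum_sub_distrib]
    refine Finset.sum_congr rfl fun h _ => ?_
    rw [← Finset.sum_sub_distrib]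
    refine Finset.sum_congr rfl fun s _ => ?_
    rw [← Finset.sum_sub_distrib]
    refine Finset.sum_congr rfl fun a _ => ?_
    ring
  constructor
  · rw [hdiff]
    push_cast
    refine Finset.sum_nonneg fun h hh => Finset.sum_nonneg fun s _ =>
      Finset.sum_nonneg fun a _ => ?_
    have hh' : h < H := Finset.mem_range.mp hh
    exact mul_nonneg (mul_nonneg (sub_nonneg.mpr (hle h hh'.le s)) (hπnn h hh' s a))
      ((hr h hh' s a).1)
  · rw [hdiff]
    have hstep : ∀ h < H, ∑ s : S, ∑ a : A,
        (visit s₁ π P h s - visit (Sum.inl s₁) πe Q h (Sum.inl s)) * π h s a * r h s a ≤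
        visit (Sum.inl s₁) πe Q H (Sum.inr ()) := by
      intro h hh
      have hnn : ∀ s, 0 ≤ visit s₁ π P h s - visit (Sum.inl s₁) πe Q h (Sum.inl s) :=
        fun s => sub_nonneg.mpr (hle h hh.le s)
      calc ∑ s : S, ∑ a : A,
            (visit s₁ π P h s - visit (Sum.inl s₁) πe Q h (Sum.inl s)) * π h s a * r h s a
          ≤ ∑ s : S, ∑ a : A,
            (visit s₁ π P h s - visit (Sum.inl s₁) πe Q h (Sum.inl s)) * π h s a := by
            refine Finset.sum_le_sum fun s _ => Finset.sum_le_sum fun a _ => ?_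
            exact mul_le_of_le_one_right (mul_nonneg (hnn s) (hπnn h hh s a)) (hr h hh s a).2
        _ = ∑ s : S, (visit s₁ π P h s - visit (Sum.inl s₁) πe Q h (Sum.inl s)) := by
            refine Finset.sum_congr rfl fun s _ => ?_
            rw [← Finset.mul_sum, hπsum h hh s, mul_one]
        _ = visit (Sum.inl s₁) πe Q h (Sum.inr ()) := by
            rw [Finset.sum_sub_distrib, hsumP h hh.le]
            have hq := hsumQ h hh.le
            rw [Fintype.sum_sum_type] at hq
            simp only [Finset.univ_unique, Finset.sum_singleton] at hq
            have hd : (default : Unit) = () := rfl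
            rw [hd] at hq
            linarith
        _ ≤ visit (Sum.inl s₁) πe Q H (Sum.inr ()) := dle H le_rfl h hh.le
    calc ∑ h ∈ Finset.range H, ∑ s : S, ∑ a : A,
          (visit s₁ π P h s - visit (Sum.inl s₁) πe Q h (Sum.inl s)) * π h s a * r h s a
        ≤ ∑ _h ∈ Finset.range H, visit (Sum.inl s₁) πe Q H (Sum.inr ()) :=
          Finset.sum_le_sum fun h hh => hstep h (Finset.mem_range.mp hh)
      _ = (H : ℝ) * visit (Sum.inl s₁) πe Q H (Sum.inr ()) := by
          rw [Finset.sum_const, Finset.card_range, nsmul_eq_mul]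
end

section
/- (Simulation lemma.) Let P' and P'' be two transition kernels on S, let r' and r'' be two reward functions on S, and let π be a policy. Define value functions by the backward recursions V'_{H+1} ≡ 0, V'_h(s) = ∑_a π_h(a|s)·( r'_h(s,a) + ∑_{s'} P'_h(s'|s,a)·V'_{h+1}(s') ), and similarly V''_h for (r'',P''). Then V'_1(s₁) − V''_1(s₁) = ∑_{h=1}^{H} ∑_{s,a} d^{π,P''}_h(s)·π_h(a|s)·( r'_h(s,a) − r''_h(s,a) + ∑_{s'} (P'_h(s'|s,a) − P''_h(s'|s,a))·V'_{h+1}(s') ). -/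
/-- Backward value recursion: `Vb π r P t h s` is the value at (0-based) step
`h` with `t` steps to go, so `V_{H+1} ≡ 0` corresponds to `t = 0` and the
value `V_h` of step `h` in a horizon-`H` MDP is `Vb π r P (H - h) h`. -/
def Vb {S A : Type*} [Fintype S] [Fintype A]
    (π : ℕ → S → A → ℝ) (r : ℕ → S → A → ℝ) (P : ℕ → S → A → S → ℝ) :
    ℕ → ℕ → S → ℝ
  | 0, _, _ => 0
  | t + 1, h, s =>
      ∑ a : A, π h s a * (r h s a + ∑ s' : S, P h s a s' * Vb π r P t (h + 1) s')

/-- Simulation lemma: for two MDPs `(r',P')`, `(r'',P'')` and a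
common policy `π`,
`V'_1(s₁) - V''_1(s₁) = ∑_{h=1}^{H} ∑_{s,a} d^{π,P''}_h(s) π_h(a|s)
  (r'_h(s,a) - r''_h(s,a) + ∑_{s'} (P'_h(s'|s,a) - P''_h(s'|s,a)) V'_{h+1}(s'))`. -/
theorem stmt_12 {S A : Type*} [Fintype S] [Fintype A] [DecidableEq S]
    [Nonempty S] [Nonempty A]
    (H : ℕ) (hH : 1 ≤ H) (s₁ : S)
    (P' P'' : ℕ → S → A → S → ℝ)
    (hP'nn : ∀ h < H, ∀ s a s', 0 ≤ P' h s a s')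
    (hP'sum : ∀ h < H, ∀ s a, ∑ s', P' h s a s' = 1)
    (hP''nn : ∀ h < H, ∀ s a s', 0 ≤ P'' h s a s')
    (hP''sum : ∀ h < H, ∀ s a, ∑ s', P'' h s a s' = 1)
    (r' r'' : ℕ → S → A → ℝ)
    (π : ℕ → S → A → ℝ)
    (hπnn : ∀ h < H, ∀ s a, 0 ≤ π h s a)
    (hπsum : ∀ h < H, ∀ s, ∑ a, π h s a = 1) :
    Vb π r' P' H 0 s₁ - Vb π r'' P'' H 0 s₁ =
      ∑ h ∈ Finset.range H, ∑ s : S, ∑ a : A,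
        visit s₁ π P'' h s * π h s a *
          (r' h s a - r'' h s a +
            ∑ s' : S, (P' h s a s' - P'' h s a s') * Vb π r' P' (H - (h + 1)) (h + 1) s') := by
  set g : ℕ → ℝ := fun h => ∑ s : S, visit s₁ π P'' h s *
      (Vb π r' P' (H - h) h s - Vb π r'' P'' (H - h) h s) with hg
  have key : ∀ h ∈ Finset.range H,
      (∑ s : S, ∑ a : A, visit s₁ π P'' h s * π h s a *
        (r' h s a - r'' h s a +
          ∑ s' : S, (P' h s a s' - P'' h s a s') * Vb π r' P' (H - (h + 1)) (h + 1) s'))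
      = g h - g (h + 1) := by
    intro h hh
    rw [Finset.mem_range] at hh
    have hHh : H - h = (H - (h + 1)) + 1 := by omega
    set t := H - (h + 1) with ht
    rw [hg]
    simp only [hHh]
    set V1 : S → ℝ := Vb π r' P' t (h + 1) with hV1
    set V2 : S → ℝ := Vb π r'' P'' t (h + 1) with hV2
    set d : S → ℝ := visit s₁ π P'' h with hd
    have hvis : visit s₁ π P'' (h + 1) = fun x' => ∑ x : S, ∑ a : A, d x * π h x a * P'' h x a x' := by
      rw [hd]; rfl
    have hVb1 : ∀ s, Vb π r' P' (t + 1) h s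
        = ∑ a : A, π h s a * (r' h s a + ∑ s' : S, P' h s a s' * V1 s') := fun s => rfl
    have hVb2 : ∀ s, Vb π r'' P'' (t + 1) h s
        = ∑ a : A, π h s a * (r'' h s a + ∑ s' : S, P'' h s a s' * V2 s') := fun s => rfl
    simp only [hvis, hVb1, hVb2]
    have e3 : ∑ s' : S, (∑ x : S, ∑ a : A, d x * π h x a * P'' h x a s') * (V1 s' - V2 s')
        = ∑ x : S, ∑ a : A, ∑ s' : S, d x * π h x a * P'' h x a s' * (V1 s' - V2 s') := by
      simp only [Finset.sum_mul]
      rw [Finset.sum_comm]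
      exact Finset.sum_congr rfl fun x _ => Finset.sum_comm
    rw [e3, ← Finset.sum_sub_distrib]
    refine Finset.sum_congr rfl fun s _ => ?_
    rw [mul_sub, Finset.mul_sum, Finset.mul_sum, ← Finset.sum_sub_distrib,
      ← Finset.sum_sub_distrib]
    refine Finset.sum_congr rfl fun a _ => ?_
    have e1 : ∑ s' : S, (P' h s a s' - P'' h s a s') * V1 s'
        = (∑ s' : S, P' h s a s' * V1 s') - ∑ s' : S, P'' h s a s' * V1 s' := by
      rw [← Finset.sum_sub_distrib]
      exact Finset.sum_congr rfl fun s' _ => by ring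
    have e2 : ∑ s' : S, d s * π h s a * P'' h s a s' * (V1 s' - V2 s')
        = d s * π h s a * ((∑ s' : S, P'' h s a s' * V1 s') - ∑ s' : S, P'' h s a s' * V2 s') := by
      rw [← Finset.sum_sub_distrib, Finset.mul_sum]
      exact Finset.sum_congr rfl fun s' _ => by ring
    rw [e1, e2]
    ring
  rw [Finset.sum_congr rfl key, Finset.sum_range_sub' g H]
  have g0 : g 0 = Vb π r' P' H 0 s₁ - Vb π r'' P'' H 0 s₁ := by
    simp [hg, visit, ite_mul, Finset.sum_ite_eq']
  have gH : g H = 0 := by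
    simp [hg, Nat.sub_self, Vb]
  rw [g0, gH, sub_zero]
end

section
/- Let K ≥ 2 and T ≥ 1 be integers and let alg be a bandit algorithm as in the K-armed bandit protocol with deterministic rewards. Let μ₀ be the all-zero reward function, and for each k ∈ {1,…,K} let μ_k(i) = 1{i = k}. Suppose that ρ_{μ₀}-almost every arm sequence (a_1,…,a_T) has at most K/2 − 1 switches. Then there exists k ∈ {1,…,K} such that the expected regret of alg on problem μ_k satisfies E_{ρ_{μ_k}}[ ∑_{t=1}^{T} (1 − μ_k(a_t)) ] ≥ T/2. -/
/-- The history seen by a bandit algorithm before round `t`: the list of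
(arm, reward) pairs for rounds `1,…,t-1` under reward function `μ`. -/
def hist {K T : ℕ} (μ : Fin K → ℝ) (a : Fin T → Fin K) (t : Fin T) :
    List (Fin K × ℝ) :=
  List.ofFn (fun s : Fin t.val =>
    (a ⟨s.val, s.isLt.trans t.isLt⟩, μ (a ⟨s.val, s.isLt.trans t.isLt⟩)))

/-- The probability that the algorithm `alg` produces the arm sequence `a`
over `T` rounds when facing the deterministic reward function `μ`. -/
def seqProb {K T : ℕ} (alg : List (Fin K × ℝ) → Fin K → ℝ)
    (μ : Fin K → ℝ) (a : Fin T → Fin K) : ℝ :=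
  ∏ t : Fin T, alg (hist μ a t) (a t)

open Classical in
/-- The number of switches `#{t < T : a_t ≠ a_{t+1}}` of an arm sequence. -/
noncomputable def switches {K T : ℕ} (a : Fin T → Fin K) : ℕ :=
  (Finset.univ.filter fun t : Fin T =>
    ∃ h : t.val + 1 < T, a t ≠ a ⟨t.val + 1, h⟩).card

lemma hist_snoc_castSucc {K T : ℕ} (μ : Fin K → ℝ) (b : Fin T → Fin K) (x : Fin K)
    (t : Fin T) : hist μ (Fin.snoc b x) (Fin.castSucc t) = hist μ b t := by
  unfold hist
  congr 1
  funext s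
  have h1 : (⟨s.val, s.isLt.trans (Fin.castSucc t).isLt⟩ : Fin (T+1))
      = Fin.castSucc ⟨s.val, (s.isLt.trans t.isLt)⟩ := rfl
  rw [h1, Fin.snoc_castSucc]

lemma hist_snoc_last {K T : ℕ} (μ : Fin K → ℝ) (b : Fin T → Fin K) (x : Fin K) :
    hist μ (Fin.snoc b x) (Fin.last T)
      = List.ofFn (fun s : Fin T => (b s, μ (b s))) := by
  unfold hist
  congr 1
  funext s
  have h1 : (⟨s.val, s.isLt.trans (Fin.last T).isLt⟩ : Fin (T+1))
      = Fin.castSucc ⟨s.val, s.isLt⟩ := rfl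
  rw [h1, Fin.snoc_castSucc]

lemma seqProb_snoc {K T : ℕ} (alg : List (Fin K × ℝ) → Fin K → ℝ)
    (μ : Fin K → ℝ) (b : Fin T → Fin K) (x : Fin K) :
    seqProb alg μ (Fin.snoc b x)
      = seqProb alg μ b * alg (List.ofFn (fun s : Fin T => (b s, μ (b s)))) x := by
  unfold seqProb
  rw [Fin.prod_univ_castSucc]
  congr 1
  · exact Finset.prod_congr rfl fun _t _ => by rw [hist_snoc_castSucc, Fin.snoc_castSucc]
  · rw [hist_snoc_last, Fin.snoc_last]

lemma sum_seqProb {K : ℕ} (alg : List (Fin K × ℝ) → Fin K → ℝ)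
    (halgsum : ∀ l, ∑ i, alg l i = 1) :
    ∀ (T : ℕ) (μ : Fin K → ℝ), ∑ a : Fin T → Fin K, seqProb alg μ a = 1 := by
  intro T
  induction T with
  | zero => intro μ; simp [seqProb]
  | succ T ih =>
    intro μ
    rw [← (Fin.snocEquiv (fun _ : Fin (T+1) => Fin K)).sum_comp
      (fun a => seqProb alg μ a)]
    rw [Fintype.sum_prod_type]
    have hsp : ∀ x : Fin K, ∀ b : Fin T → Fin K,
        seqProb alg μ (Fin.snocEquiv (fun _ => Fin K) (x, b))
          = seqProb alg μ b * alg (List.ofFn (fun s : Fin T => (b s, μ (b s)))) x :=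
      fun x b => seqProb_snoc alg μ b x
    simp only [hsp]
    rw [Finset.sum_comm]
    calc (∑ b : Fin T → Fin K, ∑ x : Fin K,
        seqProb alg μ b * alg (List.ofFn (fun s : Fin T => (b s, μ (b s)))) x)
        = ∑ b : Fin T → Fin K, seqProb alg μ b := by
          refine Finset.sum_congr rfl fun b _ => ?_
          rw [← Finset.mul_sum, halgsum, mul_one]
      _ = 1 := ih μ

lemma seqProb_nonneg {K T : ℕ} (alg : List (Fin K × ℝ) → Fin K → ℝ)
    (halgnn : ∀ l i, 0 ≤ alg l i) (μ : Fin K → ℝ) (a : Fin T → Fin K) :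
    0 ≤ seqProb alg μ a :=
  Finset.prod_nonneg fun t _ => halgnn _ _

open Classical in
lemma card_image_le_switches {K T : ℕ} (hT : 0 < T) (a : Fin T → Fin K) :
    (Finset.image a Finset.univ).card ≤ switches a + 1 := by
  classical
  set S := (Finset.univ.filter fun t : Fin T =>
    ∃ h : t.val + 1 < T, a t ≠ a ⟨t.val + 1, h⟩) with hS
  set g : Fin T → Fin K := fun t =>
    if h : t.val + 1 < T then a ⟨t.val + 1, h⟩ else a t with hg
  have hsub : Finset.image a Finset.univ ⊆ insert (a ⟨0, hT⟩) (S.image g) := by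
    intro v hv
    obtain ⟨t₀, _, ht₀⟩ := Finset.mem_image.mp hv
    have hP : ∃ n, ∃ h : n < T, a ⟨n, h⟩ = v := ⟨t₀.val, t₀.isLt, ht₀⟩
    let m := Nat.find hP
    obtain ⟨hmT, hma⟩ : ∃ h : m < T, a ⟨m, h⟩ = v := Nat.find_spec hP
    rcases Nat.eq_zero_or_pos m with hm0 | hmpos
    · have hv0 : v = a ⟨0, hT⟩ := by
        rw [← hma]; congr 1; exact Fin.ext hm0
      rw [hv0]; exact Finset.mem_insert_self _ _
    · have hm' : m - 1 < m := Nat.sub_lt hmpos one_pos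
      have hm'T : m - 1 < T := hm'.trans hmT
      have hne : a ⟨m - 1, hm'T⟩ ≠ v := by
        intro hcon
        exact Nat.find_min hP hm' ⟨hm'T, hcon⟩
      have hsucc : (m - 1) + 1 = m := Nat.succ_pred_eq_of_pos hmpos
      have hltT : (m - 1) + 1 < T := by omega
      have hmem : (⟨m - 1, hm'T⟩ : Fin T) ∈ S := by
        rw [hS, Finset.mem_filter]
        refine ⟨Finset.mem_univ _, ⟨hltT, ?_⟩⟩
        intro hcon
        apply hne
        rw [hcon]
        have : (⟨(m-1)+1, hltT⟩ : Fin T) = ⟨m, hmT⟩ := by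
          apply Fin.ext; simp [hsucc]
        rw [this, hma]
      apply Finset.mem_insert_of_mem
      apply Finset.mem_image.mpr
      refine ⟨⟨m - 1, hm'T⟩, hmem, ?_⟩
      rw [hg]
      simp only [dif_pos hltT]
      have : (⟨(m-1)+1, hltT⟩ : Fin T) = ⟨m, hmT⟩ := by
        apply Fin.ext; simp [hsucc]
      rw [this, hma]
  calc (Finset.image a Finset.univ).card
      ≤ (insert (a ⟨0, hT⟩) (S.image g)).card := Finset.card_le_card hsub
    _ ≤ (S.image g).card + 1 := Finset.card_insert_le _ _
    _ ≤ S.card + 1 := by gcongr; exact Finset.card_image_le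
    _ = switches a + 1 := by unfold switches; rw [hS]

/-- if a `K`-armed bandit algorithm almost surely makes at most
`K/2 - 1` switches on the all-zero problem, then on one of the `K` problems
`μ_k = 1{·=k}` its expected regret over `T` rounds is at least `T/2`. -/
theorem stmt_16 (K T : ℕ) (hK : 2 ≤ K) (hT : 1 ≤ T)
    (alg : List (Fin K × ℝ) → Fin K → ℝ)
    (halgnn : ∀ l i, 0 ≤ alg l i) (halgsum : ∀ l, ∑ i, alg l i = 1)
    (hswitch : ∀ a : Fin T → Fin K,
      seqProb alg (fun _ => 0) a ≠ 0 → (switches a : ℝ) ≤ (K : ℝ)/2 - 1) :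
    ∃ k : Fin K,
      (T : ℝ)/2 ≤ ∑ a : Fin T → Fin K,
        seqProb alg (fun i => if i = k then 1 else 0) a *
          ∑ t : Fin T, (1 - if a t = k then (1 : ℝ) else 0) := by
  classical
  haveI : Nonempty (Fin K) := ⟨⟨0, by omega⟩⟩
  set μ0 : Fin K → ℝ := fun _ => 0 with hμ0
  set p : (Fin T → Fin K) → ℝ := fun a => seqProb alg μ0 a with hp
  set Av : Fin K → Finset (Fin T → Fin K) := fun k =>
    Finset.univ.filter (fun a => ∀ t, a t ≠ k) with hAv
  set A : Fin K → ℝ := fun k => ∑ a ∈ Av k, p a with hA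
  -- Step A : (K:ℝ)/2 ≤ ∑ k, A k
  have hstepA : (K:ℝ)/2 ≤ ∑ k, A k := by
    have h1 : ∑ k, A k
        = ∑ a : Fin T → Fin K, ((Finset.image a Finset.univ)ᶜ.card : ℝ) * p a := by
      rw [hA]
      simp only [hAv, Finset.sum_filter]
      rw [Finset.sum_comm]
      refine Finset.sum_congr rfl fun a _ => ?_
      have h2 : (Finset.univ.filter (fun k => ∀ t, a t ≠ k))
          = (Finset.image a Finset.univ)ᶜ := by
        ext k
        simp [Finset.mem_compl, Finset.mem_image, eq_comm]
      calc (∑ k : Fin K, if ∀ t, a t ≠ k then p a else 0)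
          = ∑ k ∈ Finset.univ.filter (fun k => ∀ t, a t ≠ k), p a := by
            rw [Finset.sum_filter]
        _ = ((Finset.image a Finset.univ)ᶜ.card : ℝ) * p a := by
            rw [h2, Finset.sum_const, nsmul_eq_mul]
    rw [h1]
    have h3 : ∀ a : Fin T → Fin K,
        ((K:ℝ)/2) * p a ≤ ((Finset.image a Finset.univ)ᶜ.card : ℝ) * p a := by
      intro a
      by_cases hpa : p a = 0
      · rw [hpa]; simp
      · have hnn : 0 ≤ p a := seqProb_nonneg alg halgnn μ0 a
        have hsw := hswitch a hpa
        have hci : (Finset.image a Finset.univ).card ≤ switches a + 1 :=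
          card_image_le_switches hT a
        have hcard : ((Finset.image a Finset.univ)ᶜ.card : ℝ)
            = (K:ℝ) - (Finset.image a Finset.univ).card := by
          rw [Finset.card_compl]
          have hle : (Finset.image a Finset.univ).card ≤ K := by
            simpa using Finset.card_le_univ (Finset.image a Finset.univ)
          simp only [Fintype.card_fin]
          exact Nat.cast_sub hle
        rw [hcard]
        apply mul_le_mul_of_nonneg_right _ hnn
        have : ((Finset.image a Finset.univ).card : ℝ) ≤ (K:ℝ)/2 := by
          calc ((Finset.image a Finset.univ).card : ℝ) ≤ (switches a : ℝ) + 1 := by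
                exact_mod_cast hci
            _ ≤ ((K:ℝ)/2 - 1) + 1 := by linarith
            _ = (K:ℝ)/2 := by ring
        linarith
    calc (K:ℝ)/2 = ∑ a : Fin T → Fin K, ((K:ℝ)/2) * p a := by
          rw [← Finset.mul_sum, hp, sum_seqProb alg halgsum T μ0, mul_one]
      _ ≤ _ := Finset.sum_le_sum fun a _ => h3 a
  -- Step B : find k with 1/2 ≤ A k
  have hstepB : ∃ k : Fin K, (1/2 : ℝ) ≤ A k := by
    have hsum : ∑ _k : Fin K, (1/2 : ℝ) ≤ ∑ k, A k := by
      rw [Finset.sum_const, nsmul_eq_mul]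
      simp only [Finset.card_univ, Fintype.card_fin]
      calc (K:ℝ) * (1/2) = (K:ℝ)/2 := by ring
        _ ≤ ∑ k, A k := hstepA
    obtain ⟨k, _, hk⟩ := Finset.exists_le_of_sum_le Finset.univ_nonempty hsum
    exact ⟨k, hk⟩
  obtain ⟨k, hk⟩ := hstepB
  refine ⟨k, ?_⟩
  set μk : Fin K → ℝ := fun i => if i = k then 1 else 0 with hμk
  have havoid : ∀ a ∈ Av k, ∀ t, a t ≠ k := by
    intro a ha
    simpa [hAv] using ha
  have hpeq : ∀ a ∈ Av k, seqProb alg μk a = p a := by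
    intro a ha
    unfold seqProb
    refine Finset.prod_congr rfl fun t _ => ?_
    congr 1
    unfold hist
    congr 1
    funext s
    have := havoid a ha ⟨s.val, s.isLt.trans t.isLt⟩
    simp [hμk, hμ0, this]
  have hReq : ∀ a ∈ Av k,
      (∑ t : Fin T, (1 - if a t = k then (1:ℝ) else 0)) = T := by
    intro a ha
    have : ∀ t : Fin T, (1 - if a t = k then (1:ℝ) else 0) = 1 := by
      intro t; simp [havoid a ha t]
    rw [Finset.sum_congr rfl fun t _ => this t]
    simp
  have hRnn : ∀ a : Fin T → Fin K,
      0 ≤ ∑ t : Fin T, (1 - if a t = k then (1:ℝ) else 0) := by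
    intro a
    refine Finset.sum_nonneg fun t _ => ?_
    split <;> norm_num
  calc (T:ℝ)/2 = T * (1/2 : ℝ) := by ring
    _ ≤ T * A k := by
        apply mul_le_mul_of_nonneg_left hk (by positivity)
    _ = ∑ a ∈ Av k, seqProb alg μk a *
          ∑ t : Fin T, (1 - if a t = k then (1:ℝ) else 0) := by
        rw [hA, Finset.mul_sum]
        refine Finset.sum_congr rfl fun a ha => ?_
        rw [hpeq a ha, hReq a ha]
        ring
    _ ≤ ∑ a : Fin T → Fin K, seqProb alg μk a *
          ∑ t : Fin T, (1 - if a t = k then (1:ℝ) else 0) := by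
        apply Finset.sum_le_sum_of_subset_of_nonneg (Finset.subset_univ _)
        intro a _ _
        exact mul_nonneg (seqProb_nonneg alg halgnn μk a) (hRnn a)
end
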